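/- The sum over all partitions λ with |λ| ≤ n of (kn)!/(m_λ·(kn−ℓ(λ))!) equals binomial((k+1)n, n), the number of k-divisible type B noncrossing partitions of {±1,...,±kn}. -/

import Mathlib

/-- `m_λ = ∏_i m_i(λ)!`, the product of factorials of multiplicities of parts. -/
def mfac (lam : Multiset ℕ) : ℕ := lam.toFinset.prod fun i => (lam.count i).factorial

/-!
Write `N = kn`. The summand `N! / (m_λ (N - ℓ(λ))!)` counts the tuples `f : Fin N → ℕ` whose
nonzero entries form `λ`: permutations of the positions act transitively on the tuples with a
given multiset of values, and the stabilizer of one of them is the product of the symmetric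
groups of its level sets. Summing over `λ ⊢ m` counts all tuples with sum `m`, i.e. the multisets
of size `m` on `N` letters, of which there are `multichoose N m`; the hockey-stick recursion
`∑_{m ≤ n} multichoose N m = multichoose (N + 1) n` then gives `C(N + n, n)`.
As `ℓ(λ) ≤ |λ| ≤ n ≤ N`, the truncated subtraction `N - ℓ(λ)` never cuts off.
-/

open Finset Equiv MulAction Nat

section
variable {ι α : Type*} [Fintype ι] [DecidableEq α]

theorem Fintype.card_subtype_eq_count_map_univ (f : ι → α) (a : α) :
    Fintype.card {i // f i = a} = (univ.val.map f).count a := by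
  rw [Multiset.count_map, Fintype.card_subtype]
  simp [Finset.card, eq_comm]

theorem DomMulAct.mem_orbit_iff_map_univ_eq {f g : ι → α} :
    g ∈ orbit (Perm ι)ᵈᵐᵃ f ↔ univ.val.map g = univ.val.map f := by
  constructor
  · rintro ⟨σ, rfl⟩
    change univ.val.map (f ∘ _) = _
    rw [← Multiset.map_map]
    exact congrArg _ (Multiset.map_univ_val_equiv (DomMulAct.mk.symm σ))
  · intro h
    have e : ∀ a, {i // g i = a} ≃ {i // f i = a} := fun a =>
      Fintype.equivOfCardEq (by simp only [Fintype.card_subtype_eq_count_map_univ, h])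
    exact ⟨DomMulAct.mk (ofFiberEquiv e), funext (ofFiberEquiv_map e)⟩

theorem natCard_tuple_map_univ_eq_mul_prod_factorial (f : ι → α) :
    Nat.card {g : ι → α // univ.val.map g = univ.val.map f} *
      ∏ a ∈ (univ.val.map f).toFinset, ((univ.val.map f).count a)! = (Fintype.card ι)! := by
  classical
  have h_orbit : Nat.card (orbit (Perm ι)ᵈᵐᵃ f) =
      Nat.card {g : ι → α // univ.val.map g = univ.val.map f} :=
    Nat.card_congr (subtypeEquivRight fun _ => DomMulAct.mem_orbit_iff_map_univ_eq)
  have h_stab : Nat.card (stabilizer (Perm ι)ᵈᵐᵃ f) =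
      ∏ a ∈ (univ.val.map f).toFinset, ((univ.val.map f).count a)! := by
    rw [Nat.card_congr (subtypeEquiv (p := (· ∈ stabilizer (Perm ι)ᵈᵐᵃ f))
        (q := fun σ : Perm ι => f ∘ σ = f) DomMulAct.mk.symm
        fun _ => DomMulAct.mem_stabilizer_iff),
      Nat.card_eq_fintype_card, DomMulAct.stabilizer_card']
    exact prod_congr rfl fun a _ => by rw [Fintype.card_subtype_eq_count_map_univ]
  rw [← h_orbit, ← h_stab, Nat.card_coe_set_eq, ← index_stabilizer, mul_comm,
    Subgroup.card_mul_index, Nat.card_congr DomMulAct.mk.symm, Nat.card_perm,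
    Nat.card_eq_fintype_card]

theorem Multiset.natCard_fin_tuple_eq_mul_prod_factorial (s : Multiset α) {N : ℕ}
    (hs : Multiset.card s = N) :
    Nat.card {g : Fin N → α // univ.val.map g = s} * ∏ a ∈ s.toFinset, (s.count a)! =
      N ! := by
  obtain ⟨l, rfl⟩ := Quot.exists_rep s
  subst hs
  have hl : univ.val.map l.get = (l : Multiset α) := by
    rw [Fin.univ_val_map, List.ofFn_get]
  have := natCard_tuple_map_univ_eq_mul_prod_factorial l.get
  rwa [hl, Fintype.card_fin] at this

end

theorem mfac_eq_prod_of_subset {s : Multiset ℕ} {t : Finset ℕ} (h : s.toFinset ⊆ t) :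
    mfac s = ∏ a ∈ t, (s.count a)! :=
  prod_subset h fun a _ ha => by rw [Multiset.count_eq_zero.2 (by simpa using ha), factorial_zero]

theorem mfac_add_replicate {s : Multiset ℕ} {a : ℕ} (ha : a ∉ s) (z : ℕ) :
    mfac (s + Multiset.replicate z a) = mfac s * z ! := by
  have hsub : (s + Multiset.replicate z a).toFinset ⊆ insert a s.toFinset := by
    intro b
    simp only [Multiset.toFinset_add, mem_union, Multiset.mem_toFinset, Multiset.mem_replicate,
      mem_insert]
    tauto
  rw [mfac_eq_prod_of_subset hsub, prod_insert (by simpa using ha), mfac, mul_comm]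
  congr 1
  · refine prod_congr rfl fun b hb => ?_
    have : a ≠ b := by rintro rfl; exact ha (by simpa using hb)
    simp [Multiset.count_replicate, this]
  · simp [Multiset.count_eq_zero.2 ha]

namespace Nat.Partition

theorem ofSums_eq_iff {m : ℕ} {l : Multiset ℕ} (hl : l.sum = m) (P : Nat.Partition m) :
    ofSums m l hl = P ↔
      l = P.parts + Multiset.replicate (Multiset.card l - Multiset.card P.parts) 0 := by
  have hsplit : l = l.filter (· ≠ 0) + Multiset.replicate (l.count 0) 0 := by
    rw [← Multiset.filter_eq', ← Multiset.filter_add_not (· ≠ 0) l]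
    simp
  constructor
  · rintro rfl
    conv_lhs => rw [hsplit]
    have hcard := congrArg Multiset.card hsplit
    rw [Multiset.card_add, Multiset.card_replicate] at hcard
    congr 2
    simp only [ofSums_parts]
    omega
  · intro h
    ext1
    rw [ofSums_parts, h, Multiset.filter_add,
      Multiset.filter_eq_self.2 fun a ha => (P.parts_pos ha).ne',
      Multiset.filter_eq_nil.2 fun a ha => by simp [Multiset.eq_of_mem_replicate ha], add_zero]

def ofTuple {N m : ℕ} (f : {f : Fin N → ℕ // ∑ i, f i = m}) : Nat.Partition m :=
  ofSums m (univ.val.map f.1) f.2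

theorem natCard_ofTuple_fiber_eq_natCard_map_univ {N m : ℕ} (P : Nat.Partition m) :
    Nat.card {f : {f : Fin N → ℕ // ∑ i, f i = m} // ofTuple f = P} =
      Nat.card {g : Fin N → ℕ //
        univ.val.map g = P.parts + Multiset.replicate (N - Multiset.card P.parts) 0} := by
  refine Nat.card_congr ((subtypeSubtypeEquivSubtypeExists _ _).trans (subtypeEquivRight ?_))
  intro g
  have hcard : Multiset.card (univ.val.map g) = N := by simp
  constructor
  · rintro ⟨hg, hP⟩
    have := (ofSums_eq_iff (l := univ.val.map g) hg P).1 hP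
    rwa [hcard] at this
  · intro h
    have hsum : ∑ i, g i = m := by
      change (univ.val.map g).sum = m
      simp [h, P.parts_sum]
    exact ⟨hsum, (ofSums_eq_iff (l := univ.val.map g) hsum P).2 (by rwa [hcard])⟩

theorem card_parts_le {m : ℕ} (P : Nat.Partition m) : Multiset.card P.parts ≤ m := by
  simpa [P.parts_sum] using Multiset.card_nsmul_le_sum (a := 1) fun _ hx => P.parts_pos hx

theorem natCard_ofTuple_fiber {N m : ℕ} (P : Nat.Partition m) (hP : Multiset.card P.parts ≤ N) :
    Nat.card {f : {f : Fin N → ℕ // ∑ i, f i = m} // ofTuple f = P} =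
      N ! / (mfac P.parts * (N - Multiset.card P.parts)!) := by
  have hpos : 0 < mfac P.parts * (N - Multiset.card P.parts)! :=
    Nat.mul_pos (prod_pos fun _ _ => factorial_pos _) (factorial_pos _)
  refine (Nat.div_eq_of_eq_mul_left hpos ?_).symm
  rw [natCard_ofTuple_fiber_eq_natCard_map_univ,
    ← mfac_add_replicate fun h => (P.parts_pos h).ne rfl]
  exact (Multiset.natCard_fin_tuple_eq_mul_prod_factorial _ (by simp; omega)).symm

end Nat.Partition

theorem sum_factorial_div_mfac_eq_multichoose {N m : ℕ} (hm : m ≤ N) :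
    ∑ P : Nat.Partition m, N ! / (mfac P.parts * (N - Multiset.card P.parts)!) =
      multichoose N m := by
  have : Finite {f : Fin N → ℕ // ∑ i, f i = m} := .of_equiv _ (Sym.equivNatSumOfFintype _ m)
  calc ∑ P : Nat.Partition m, N ! / (mfac P.parts * (N - Multiset.card P.parts)!)
      = ∑ P, Nat.card {f : {f : Fin N → ℕ // ∑ i, f i = m} //
          Nat.Partition.ofTuple f = P} :=
        sum_congr rfl fun P _ =>
          (Nat.Partition.natCard_ofTuple_fiber P (P.card_parts_le.trans hm)).symm
    _ = Nat.card {f : Fin N → ℕ // ∑ i, f i = m} := by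
        rw [← Nat.card_sigma, Nat.card_congr (sigmaFiberEquiv _)]
    _ = multichoose N m := by
        rw [← Nat.card_congr (Sym.equivNatSumOfFintype _ m), Sym.natCard_sym_eq_multichoose,
          Nat.card_fin]

theorem Nat.sum_range_succ_multichoose (N n : ℕ) :
    ∑ m ∈ range (n + 1), multichoose N m = multichoose (N + 1) n := by
  induction n with
  | zero => simp
  | succ n ih => rw [sum_range_succ, ih, multichoose_succ_succ, add_comm]

/-- The sum over all partitions `λ` with `|λ| ≤ n` of `(kn)!/(m_λ·(kn-ℓ(λ))!)` equals
`C((k+1)n, n)`, the number of `k`-divisible type B noncrossing partitions of `{±1,…,±kn}`. -/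
theorem stmt_16 (k n : ℕ) (hk : 0 < k) :
    ∑ m ∈ Finset.range (n + 1), ∑ P : Nat.Partition m,
        (k * n).factorial /
          (mfac P.parts * (k * n - Multiset.card P.parts).factorial) =
      Nat.choose ((k + 1) * n) n := by
  have hn : n ≤ k * n := Nat.le_mul_of_pos_left n hk
  rw [sum_congr rfl fun m hm => sum_factorial_div_mfac_eq_multichoose
    ((Nat.lt_succ_iff.1 (mem_range.1 hm)).trans hn), Nat.sum_range_succ_multichoose,
    multichoose_eq, add_right_comm, Nat.add_sub_cancel, add_mul, one_mul]
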